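/- arXiv:2102.02276 — 3 statements merged into one kernel-verified Lean document; each statement's English description precedes it below -/
import Mathlib

section
/- If s^{k-1} ∈ ℝ^n is nonzero, ỹ^k ∈ ℝ^n, χ ∈ [0,2], and ζ := max{0, −χ·⟨s^{k-1}, ỹ^k⟩/‖s^{k-1}‖²}, then the CFM direction s^k := ỹ^k + ζ·s^{k-1} satisfies ‖s^k‖² ≤ ‖ỹ^k‖². -/
open RealInnerProductSpace

theorem norm_add_smul_sq_eq {E : Type*} [NormedAddCommGroup E] [InnerProductSpace ℝ E]
    (y s : E) (ζ : ℝ) :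
    ‖y + ζ • s‖ ^ 2 = ‖y‖ ^ 2 + ζ * (ζ * ‖s‖ ^ 2 + 2 * ⟪s, y⟫) := by
  rw [norm_add_sq_real, inner_smul_right, norm_smul, mul_pow, Real.norm_eq_abs, sq_abs,
    real_inner_comm]
  ring

/-- With `t = -χa/N`, one has `t (tN + 2a) = -χ(2-χ)a²/N`, which is nonpositive for
`χ ∈ [0,2]`; the clipped value `0` gives `0`. -/
theorem max_zero_mul_add_nonpos {a N χ : ℝ} (hN : 0 ≤ N) (hχ : χ ∈ Set.Icc (0 : ℝ) 2) :
    max 0 (-χ * a / N) * (max 0 (-χ * a / N) * N + 2 * a) ≤ 0 := by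
  rcases le_total (-χ * a / N) 0 with ht | ht
  · rw [max_eq_left ht, zero_mul]
  rcases hN.eq_or_lt with rfl | hN
  · simp
  have hq : -χ * a / N * (-χ * a / N * N + 2 * a) = -(χ * (2 - χ) * a ^ 2) / N := by
    field_simp
    ring
  rw [max_eq_right ht, hq]
  have hnum : 0 ≤ χ * (2 - χ) * a ^ 2 :=
    mul_nonneg (mul_nonneg hχ.1 (sub_nonneg.mpr hχ.2)) (sq_nonneg a)
  exact div_nonpos_of_nonpos_of_nonneg (neg_nonpos.mpr hnum) hN.le

theorem stmt_4_general (n : ℕ) (sprev ytil : EuclideanSpace ℝ (Fin n))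
    (χ : ℝ) (hχ : χ ∈ Set.Icc (0 : ℝ) 2)
    (ζ : ℝ) (hζ : ζ = max 0 (-χ * ⟪sprev, ytil⟫ / ‖sprev‖ ^ 2)) :
    ‖ytil + ζ • sprev‖ ^ 2 ≤ ‖ytil‖ ^ 2 := by
  rw [norm_add_smul_sq_eq, hζ]
  linarith [max_zero_mul_add_nonpos (a := ⟪sprev, ytil⟫) (sq_nonneg ‖sprev‖) hχ]

/-- The Camerini–Fratta–Maffioli deflected direction `s^k = ỹ^k + ζ·s^{k-1}` with
`ζ = max{0, −χ⟨s^{k-1}, ỹ^k⟩/‖s^{k-1}‖²}` and `χ ∈ [0,2]` satisfies `‖s^k‖² ≤ ‖ỹ^k‖²`. -/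
theorem stmt_4 (n : ℕ) (sprev ytil : EuclideanSpace ℝ (Fin n)) (hs : sprev ≠ 0)
    (χ : ℝ) (hχ : χ ∈ Set.Icc (0 : ℝ) 2)
    (ζ : ℝ) (hζ : ζ = max 0 (-χ * ⟪sprev, ytil⟫ / ‖sprev‖ ^ 2)) :
    ‖ytil + ζ • sprev‖ ^ 2 ≤ ‖ytil‖ ^ 2 :=
  stmt_4_general n sprev ytil χ hχ ζ hζ
end

section
/- Suppose nonnegative numbers e_k := H(λ*) − E[H(λ^k)] satisfy E[‖λ^{k+1} − λ*‖²] ≤ E[‖λ^k − λ*‖²] − e_k²/G^U + M for all k, with ‖λ¹ − λ*‖² ≤ λ^U and constants G^U, M, λ^U > 0. Then H(λ*) − E[max_{k∈[K]} H(λ^k)] ≤ sqrt((λ^U + K·M)·G^U / K), which converges to sqrt(M·G^U) as K → ∞. -/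
/-!
Summing the recursion `r (k + 1) ≤ r k - e_k² / G + M` telescopes to
`∑_{k ≤ K} e_k² ≤ (r 1 + K M) G`, so some `k ≤ K` has `e_k ≤ √((λᵁ + K M) G / K)`.
Since the pointwise maximum dominates `X k`, its expectation is at least `E[X k]`, which gives the
bound; the limit is that of `λᵁ G / K + M G`.
-/

open MeasureTheory Filter Finset

lemma sum_Icc_le_of_le_sub_add {r d : ℕ → ℝ} {M : ℝ}
    (hrec : ∀ k, 1 ≤ k → r (k + 1) ≤ r k - d k + M) (K : ℕ) :
    ∑ k ∈ Icc 1 K, d k ≤ r 1 - r (K + 1) + K * M := by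
  induction K with
  | zero => simp
  | succ n ih =>
    rw [sum_Icc_succ_top (by omega)]
    have := hrec (n + 1) (by omega)
    push_cast
    linarith

lemma Finset.exists_le_sqrt_sum_sq_div_card {ι : Type*} {s : Finset ι} (hs : s.Nonempty)
    (e : ι → ℝ) : ∃ i ∈ s, e i ≤ √((∑ j ∈ s, e j ^ 2) / #s) := by
  have hcard : (0 : ℝ) < #s := by exact_mod_cast hs.card_pos
  obtain ⟨i, hi, hle⟩ : ∃ i ∈ s, e i ^ 2 ≤ (∑ j ∈ s, e j ^ 2) / #s := by
    apply exists_le_of_sum_le hs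
    rw [sum_const, nsmul_eq_mul, mul_div_cancel₀ _ hcard.ne']
  exact ⟨i, hi, (le_abs_self _).trans (Real.abs_le_sqrt hle)⟩

lemma MeasureTheory.Integrable.finset_sup' {Ω ι : Type*} [MeasurableSpace Ω] {μ : Measure Ω}
    {X : ι → Ω → ℝ} (hX : ∀ i, Integrable (X i) μ) {s : Finset ι} (hs : s.Nonempty) :
    Integrable (fun ω => s.sup' hs (X · ω)) μ := by
  induction hs using Nonempty.cons_induction with
  | singleton a => exact hX a
  | cons a s ha hs ih =>
    simp only [sup'_cons hs]
    exact (hX a).sup ih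

lemma tendsto_add_mul_div_natCast (a b : ℝ) :
    Tendsto (fun n : ℕ => (a + n * b) / n) atTop (nhds b) := by
  have hlim : Tendsto (fun n : ℕ => a / n + b) atTop (nhds (0 + b)) :=
    (tendsto_const_div_atTop_nhds_zero_nat a).add tendsto_const_nhds
  rw [zero_add] at hlim
  refine hlim.congr' ?_
  filter_upwards [eventually_ne_atTop 0] with n hn
  field_simp

theorem stmt_10_general {Ω : Type*} [MeasurableSpace Ω] (μ : Measure Ω)
    (X : ℕ → Ω → ℝ) (Hstar : ℝ)
    (hXint : ∀ k, Integrable (X k) μ)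
    (r : ℕ → ℝ) (GU M lamU : ℝ) (hGU : 0 < GU)
    (hrnn : ∀ k, 0 ≤ r k) (hr1 : r 1 ≤ lamU)
    (hrec : ∀ k : ℕ, 1 ≤ k →
      r (k + 1) ≤ r k - (Hstar - ∫ ω, X k ω ∂μ) ^ 2 / GU + M) :
    (∀ K : ℕ, ∀ hK : 1 ≤ K,
      Hstar - ∫ ω, (Finset.Icc 1 K).sup' (Finset.nonempty_Icc.mpr hK) (fun k => X k ω) ∂μ ≤
        Real.sqrt ((lamU + K * M) * GU / K)) ∧
    Tendsto (fun K : ℕ => Real.sqrt ((lamU + K * M) * GU / K)) atTop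
      (nhds (Real.sqrt (M * GU))) := by
  refine ⟨fun K hK => ?_, ?_⟩
  · set e : ℕ → ℝ := fun k => Hstar - ∫ ω, X k ω ∂μ
    have hsum : ∑ k ∈ Icc 1 K, e k ^ 2 ≤ (lamU + K * M) * GU := by
      have := sum_Icc_le_of_le_sub_add hrec K
      rw [← sum_div, div_le_iff₀ hGU] at this
      exact this.trans (mul_le_mul_of_nonneg_right (by linarith [hrnn (K + 1)]) hGU.le)
    obtain ⟨k, hk, hek⟩ := exists_le_sqrt_sum_sq_div_card (nonempty_Icc.mpr hK) e
    have hmax : ∫ ω, X k ω ∂μ ≤ ∫ ω, (Icc 1 K).sup' (nonempty_Icc.mpr hK) (X · ω) ∂μ :=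
      integral_mono (hXint k) (Integrable.finset_sup' hXint _) fun ω => le_sup' (X · ω) hk
    calc _ ≤ e k := by linarith
      _ ≤ √((∑ j ∈ Icc 1 K, e j ^ 2) / #(Icc 1 K)) := hek
      _ ≤ _ := by rw [Nat.card_Icc, Nat.add_sub_cancel]; gcongr
  · simp_rw [mul_div_right_comm _ GU]
    exact ((tendsto_add_mul_div_natCast lamU M).mul_const GU).sqrt

/-- Rule-2 trade-off bound: if `e_k := H(λ*) − E[H(λ^k)] ≥ 0` and
`E[‖λ^{k+1} − λ*‖²] ≤ E[‖λ^k − λ*‖²] − e_k²/G^U + M` with `‖λ¹ − λ*‖² ≤ λ^U`, then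
`H(λ*) − E[max_{k∈[K]} H(λ^k)] ≤ sqrt((λ^U + K·M)·G^U/K)`, a bound converging to
`sqrt(M·G^U)` as `K → ∞`. -/
theorem stmt_10 {Ω : Type*} [MeasurableSpace Ω] (μ : Measure Ω) [IsProbabilityMeasure μ]
    (X : ℕ → Ω → ℝ) (Hstar : ℝ)
    (hXint : ∀ k, Integrable (X k) μ)
    (hXle : ∀ k ω, X k ω ≤ Hstar)
    (r : ℕ → ℝ) (GU M lamU : ℝ) (hGU : 0 < GU) (hM : 0 < M) (hlamU : 0 < lamU)
    (hrnn : ∀ k, 0 ≤ r k) (hr1 : r 1 ≤ lamU)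
    (hrec : ∀ k : ℕ, 1 ≤ k →
      r (k + 1) ≤ r k - (Hstar - ∫ ω, X k ω ∂μ) ^ 2 / GU + M) :
    (∀ K : ℕ, ∀ hK : 1 ≤ K,
      Hstar - ∫ ω, (Finset.Icc 1 K).sup' (Finset.nonempty_Icc.mpr hK) (fun k => X k ω) ∂μ ≤
        Real.sqrt ((lamU + K * M) * GU / K)) ∧
    Tendsto (fun K : ℕ => Real.sqrt ((lamU + K * M) * GU / K)) atTop
      (nhds (Real.sqrt (M * GU))) :=
  stmt_10_general μ X Hstar hXint r GU M lamU hGU hrnn hr1 hrec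
end

section
/- Under the recursion ‖λ^{k+1} − λ*‖² ≤ ‖λ^k − λ*‖² − c·(H(λ*) − H(λ^k))² with c = G^L/G^U > 0 and ‖λ¹ − λ*‖² ≤ λ^U, one obtains for all K: 0 ≤ H(λ*) − E[max_{k∈[K]} H(λ^k)] ≤ sqrt(λ^U·G^U/(G^L·K)). Hence E[H_best(λ^K)] → H(λ*) with rate O(sqrt(G^U/K)). -/
/-!
Summing the descent inequality telescopes to
`(G^L/G^U) ∑_{k ≤ K} (H* - H(λ^k))² ≤ ‖λ¹ - λ*‖² ≤ λ^U`, so for every outcome some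
iterate among the first `K` has squared gap at most the average
`λ^U G^U / (G^L K)`. The best iterate is at least as good, and integrating this pointwise bound
against a probability measure gives the bound in expectation.
-/

open MeasureTheory Filter Finset

theorem Finset.sum_Icc_le_sub_of_le_sub {M : Type*} [AddCommGroup M] [PartialOrder M]
    [IsOrderedAddMonoid M] {a d : ℕ → M} {m n : ℕ} (hmn : m ≤ n)
    (h : ∀ k ∈ Icc m n, a k ≤ d k - d (k + 1)) :
    ∑ k ∈ Icc m n, a k ≤ d m - d (n + 1) :=
  calc ∑ k ∈ Icc m n, a k ≤ ∑ k ∈ Icc m n, -(d (k + 1) - d k) := by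
        simpa only [neg_sub] using sum_le_sum h
    _ = d m - d (n + 1) := by rw [sum_neg_distrib, sum_Icc_sub hmn, neg_sub]

theorem Finset.sub_sup'_le_sqrt_of_sum_sq_le {ι : Type*} {s : Finset ι} (hs : s.Nonempty)
    {x : ι → ℝ} {H B : ℝ} (h : ∑ k ∈ s, (H - x k) ^ 2 ≤ B) :
    H - s.sup' hs x ≤ √(B / #s) := by
  have hsum : ∑ _k ∈ s, B / #s = B := by
    rw [sum_const, nsmul_eq_mul, mul_div_cancel₀]
    exact_mod_cast hs.card_pos.ne'
  obtain ⟨k, hk, hk_le⟩ := exists_le_of_sum_le hs (h.trans hsum.ge)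
  calc H - s.sup' hs x ≤ H - x k := by gcongr; exact le_sup' x hk
    _ ≤ |H - x k| := le_abs_self _
    _ = √((H - x k) ^ 2) := (Real.sqrt_sq_eq_abs _).symm
    _ ≤ √(B / #s) := Real.sqrt_le_sqrt hk_le

theorem Finset.sub_sup'_le_sqrt_of_descent {x d : ℕ → ℝ} {H c L : ℝ} (hc : 0 < c) {K : ℕ}
    (hK : 1 ≤ K) (hd1 : d 1 ≤ L) (hdK : 0 ≤ d (K + 1))
    (hrec : ∀ k ∈ Icc 1 K, d (k + 1) ≤ d k - c * (H - x k) ^ 2) :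
    H - (Icc 1 K).sup' (nonempty_Icc.mpr hK) x ≤ √(L / (c * K)) := by
  have htel := sum_Icc_le_sub_of_le_sub (a := fun k => c * (H - x k) ^ 2) (d := d) hK
    fun k hk => by linarith [hrec k hk]
  have hsq : ∑ k ∈ Icc 1 K, (H - x k) ^ 2 ≤ L / c := by
    rw [le_div_iff₀' hc, mul_sum]
    linarith
  simpa [div_div] using sub_sup'_le_sqrt_of_sum_sq_le (nonempty_Icc.mpr hK) hsq

theorem MeasureTheory.Integrable.finset_sup'_apply {Ω ι : Type*} [MeasurableSpace Ω]
    {μ : Measure Ω} {s : Finset ι} (hs : s.Nonempty) {f : ι → Ω → ℝ}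
    (hf : ∀ k ∈ s, Integrable (f k) μ) :
    Integrable (fun ω => s.sup' hs (fun k => f k ω)) μ := by
  simpa only [← Finset.sup'_apply] using
    sup'_induction (p := fun g => Integrable g μ) hs f (fun _ hg _ hh => hg.sup hh) hf

theorem MeasureTheory.integral_mem_Icc_of_forall_mem_Icc {Ω : Type*} [MeasurableSpace Ω]
    {μ : Measure Ω} [IsProbabilityMeasure μ] {f : Ω → ℝ} (hf : Integrable f μ) {a b : ℝ}
    (h : ∀ ω, f ω ∈ Set.Icc a b) : ∫ ω, f ω ∂μ ∈ Set.Icc a b := by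
  constructor
  · simpa using integral_mono (integrable_const a) hf fun ω => (h ω).1
  · simpa using integral_mono hf (integrable_const b) fun ω => (h ω).2

theorem stmt_12_general {Ω : Type*} [MeasurableSpace Ω] (μ : Measure Ω) [IsProbabilityMeasure μ]
    (X : ℕ → Ω → ℝ) (Hstar : ℝ)
    (hXint : ∀ k, Integrable (X k) μ)
    (hXle : ∀ k ω, X k ω ≤ Hstar)
    (dist2 : ℕ → Ω → ℝ) (Glow Gup lamU : ℝ)
    (hGlow : 0 < Glow) (hGup : 0 < Gup)
    (hdnn : ∀ k ω, 0 ≤ dist2 k ω) (hd1 : ∀ ω, dist2 1 ω ≤ lamU)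
    (hrec : ∀ (k : ℕ), 1 ≤ k → ∀ ω,
      dist2 (k + 1) ω ≤ dist2 k ω - (Glow / Gup) * (Hstar - X k ω) ^ 2) :
    (∀ K : ℕ, ∀ hK : 1 ≤ K,
      0 ≤ Hstar -
          ∫ ω, (Finset.Icc 1 K).sup' (Finset.nonempty_Icc.mpr hK) (fun k => X k ω) ∂μ ∧
      Hstar - ∫ ω, (Finset.Icc 1 K).sup' (Finset.nonempty_Icc.mpr hK) (fun k => X k ω) ∂μ ≤
        Real.sqrt (lamU * Gup / (Glow * K))) ∧
    Tendsto
      (fun K : ℕ =>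
        if hK : 1 ≤ K then
          ∫ ω, (Finset.Icc 1 K).sup' (Finset.nonempty_Icc.mpr hK) (fun k => X k ω) ∂μ
        else 0)
      atTop (nhds Hstar) := by
  have hgap : ∀ (K : ℕ) (hK : 1 ≤ K) ω,
      Hstar - (Icc 1 K).sup' (nonempty_Icc.mpr hK) (fun k => X k ω) ≤
        √(lamU * Gup / (Glow * K)) := by
    intro K hK ω
    convert sub_sup'_le_sqrt_of_descent (x := (X · ω)) (d := (dist2 · ω)) (div_pos hGlow hGup)
      hK (hd1 ω) (hdnn (K + 1) ω) fun k hk => hrec k (mem_Icc.mp hk).1 ω using 2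
    field_simp
  have hbounds : ∀ (K : ℕ) (hK : 1 ≤ K),
      ∫ ω, (Icc 1 K).sup' (nonempty_Icc.mpr hK) (fun k => X k ω) ∂μ ∈
        Set.Icc (Hstar - √(lamU * Gup / (Glow * K))) Hstar := fun K hK =>
    integral_mem_Icc_of_forall_mem_Icc (Integrable.finset_sup'_apply _ fun k _ => hXint k)
      fun ω => ⟨by linarith [hgap K hK ω], sup'_le _ _ fun k _ => hXle k ω⟩
  refine ⟨fun K hK => ⟨by linarith [(hbounds K hK).2], by linarith [(hbounds K hK).1]⟩, ?_⟩
  have hrate : Tendsto (fun K : ℕ => √(lamU * Gup / (Glow * K))) atTop (nhds 0) := by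
    simpa [← div_div] using (tendsto_const_div_atTop_nhds_zero_nat (lamU * Gup / Glow)).sqrt
  refine tendsto_of_tendsto_of_tendsto_of_le_of_le' (by simpa using tendsto_const_nhds.sub hrate)
    tendsto_const_nhds ?_ ?_ <;> filter_upwards [eventually_ge_atTop 1] with K hK <;>
    rw [dif_pos hK]
  · exact (hbounds K hK).1
  · exact (hbounds K hK).2

/-- Under the pointwise recursion
`‖λ^{k+1} − λ*‖² ≤ ‖λ^k − λ*‖² − (G^L/G^U)(H(λ*) − H(λ^k))²` with `‖λ¹ − λ*‖² ≤ λ^U`,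
one has `0 ≤ H(λ*) − E[max_{k∈[K]} H(λ^k)] ≤ sqrt(λ^U·G^U/(G^L·K))` for all `K`, hence
`E[H_best(λ^K)] → H(λ*)` (with rate `O(sqrt(G^U/K))`). -/
theorem stmt_12 {Ω : Type*} [MeasurableSpace Ω] (μ : Measure Ω) [IsProbabilityMeasure μ]
    (X : ℕ → Ω → ℝ) (Hstar : ℝ)
    (hXint : ∀ k, Integrable (X k) μ)
    (hXle : ∀ k ω, X k ω ≤ Hstar)
    (dist2 : ℕ → Ω → ℝ) (Glow Gup lamU : ℝ)
    (hGlow : 0 < Glow) (hGup : 0 < Gup) (hlamU : 0 < lamU)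
    (hdnn : ∀ k ω, 0 ≤ dist2 k ω) (hd1 : ∀ ω, dist2 1 ω ≤ lamU)
    (hrec : ∀ (k : ℕ), 1 ≤ k → ∀ ω,
      dist2 (k + 1) ω ≤ dist2 k ω - (Glow / Gup) * (Hstar - X k ω) ^ 2) :
    (∀ K : ℕ, ∀ hK : 1 ≤ K,
      0 ≤ Hstar -
          ∫ ω, (Finset.Icc 1 K).sup' (Finset.nonempty_Icc.mpr hK) (fun k => X k ω) ∂μ ∧
      Hstar - ∫ ω, (Finset.Icc 1 K).sup' (Finset.nonempty_Icc.mpr hK) (fun k => X k ω) ∂μ ≤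
        Real.sqrt (lamU * Gup / (Glow * K))) ∧
    Tendsto
      (fun K : ℕ =>
        if hK : 1 ≤ K then
          ∫ ω, (Finset.Icc 1 K).sup' (Finset.nonempty_Icc.mpr hK) (fun k => X k ω) ∂μ
        else 0)
      atTop (nhds Hstar) :=
  stmt_12_general μ X Hstar hXint hXle dist2 Glow Gup lamU hGlow hGup hdnn hd1 hrec
end
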